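/- arXiv:1910.06630 — 6 statements merged into one kernel-verified Lean document; each statement's English description precedes it below -/
import Mathlib

section
/- Let R be a semi-local ring containing a field of cardinality at least three, and let I ⊂ R be a proper ideal. If a ∈ R is such that the residue class of a in R/I is a unit, then there exists b ∈ I such that a + b is a unit in R. -/
/-!
Let `u ∈ I` be such that `1 - u` lies in every maximal ideal not containing `I`; it exists
because `I` is coprime to the finite intersection of those maximal ideals. Then
`a + (1 - a) u ≡ a` modulo `I`, and `a + (1 - a) u - 1 = (a - 1)(1 - u)`, so
`a + (1 - a) u` avoids every maximal ideal: those containing `I` because `a` is a unit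
modulo `I`, the others because it is `1` modulo them.
-/

namespace Ideal

variable {R : Type*} [CommRing R]

theorem notMem_of_isUnit_mk_of_le {I J : Ideal R} (hIJ : I ≤ J) (hJ : J ≠ ⊤) {a : R}
    (ha : IsUnit (Quotient.mk I a)) : a ∉ J := by
  intro haJ
  have hunit : IsUnit (Quotient.mk J a) := by
    simpa only [Quotient.factor_mk] using ha.map (Quotient.factor hIJ)
  rw [Quotient.eq_zero_iff_mem.mpr haJ, isUnit_zero_iff, Quotient.zero_eq_one_iff] at hunit
  exact hJ hunit

theorem exists_mem_forall_one_sub_mem_of_not_le [Finite (MaximalSpectrum R)] (I : Ideal R) :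
    ∃ u ∈ I, ∀ m : Ideal R, m.IsMaximal → ¬I ≤ m → 1 - u ∈ m := by
  set s := (Set.toFinite {m : MaximalSpectrum R | ¬I ≤ m.asIdeal}).toFinset
  have hcop : IsCoprime I (⨅ m ∈ s, m.asIdeal) :=
    isCoprime_biInf fun m hm ↦ isCoprime_iff_codisjoint.mpr
      (m.isMaximal.out.not_le_iff_codisjoint.mp (by simpa [s] using hm)).symm
  obtain ⟨u, huI, v, hv, huv⟩ := hcop.exists
  refine ⟨u, huI, fun m hm hIm ↦ ?_⟩
  rw [← huv, add_sub_cancel_left]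
  exact (Submodule.mem_iInf _).mp ((Submodule.mem_iInf _).mp hv ⟨m, hm⟩) (by simpa [s] using hIm)

theorem isUnit_of_forall_isMaximal_notMem {r : R} (h : ∀ m : Ideal R, m.IsMaximal → r ∉ m) :
    IsUnit r := by
  by_contra hr
  obtain ⟨m, hm, hrm⟩ := exists_max_ideal_of_mem_nonunits hr
  exact h m hm hrm

end Ideal

theorem milnor_elem_unit_lift_general
    (R : Type*) [CommRing R] [Finite (MaximalSpectrum R)]
    (I : Ideal R)
    (a : R) (ha : IsUnit (Ideal.Quotient.mk I a)) :
    ∃ b ∈ I, IsUnit (a + b) := by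
  obtain ⟨u, huI, hu⟩ := I.exists_mem_forall_one_sub_mem_of_not_le
  refine ⟨(1 - a) * u, I.mul_mem_left _ huI, Ideal.isUnit_of_forall_isMaximal_notMem
    fun m hm hmem ↦ ?_⟩
  by_cases hIm : I ≤ m
  · refine Ideal.notMem_of_isUnit_mk_of_le hIm hm.ne_top ha ?_
    simpa using m.sub_mem hmem (hIm (I.mul_mem_left (1 - a) huI))
  · refine hm.ne_top (m.eq_top_of_isUnit_mem ?_ isUnit_one)
    have : a + (1 - a) * u - (a - 1) * (1 - u) = 1 := by ring
    rw [← this]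
    exact m.sub_mem hmem (m.mul_mem_left (a - 1) (hu m hm hIm))

/-- Let `R` be a semi-local ring (commutative Noetherian with finitely
many maximal ideals) containing a field of cardinality at least three, and let `I ⊂ R`
be a proper ideal.  If `a ∈ R` is such that the residue class of `a` in `R/I` is a unit,
then there exists `b ∈ I` such that `a + b` is a unit in `R`. -/
theorem milnor_elem_unit_lift
    (R : Type*) [CommRing R] [IsNoetherianRing R] [Finite (MaximalSpectrum R)]
    (k : Type*) [Field k] [Algebra k R] (hk : (3 : Cardinal) ≤ Cardinal.mk k)
    (I : Ideal R) (hI : I ≠ ⊤)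
    (a : R) (ha : IsUnit (Ideal.Quotient.mk I a)) :
    ∃ b ∈ I, IsUnit (a + b) :=
  milnor_elem_unit_lift_general R I a ha
end

section
/- Let R be a semi-local ring containing a field of cardinality at least three, and let I ⊂ R be a proper ideal. If a ∈ R is such that both the residue classes of a and of 1 − a in R/I are units, then there exists b ∈ I such that both a + b and 1 − (a + b) are units in R. -/
/-!
Pick `x ∈ k` with `x ≠ 0, 1`, so that its image `t` in `R` and `1 - t` are units. Let `J` be the
intersection of the (finitely many) maximal ideals not containing `I`: it is coprime to `I`, and
`I ⊓ J` lies in the Jacobson radical, so an element of `R` is a unit as soon as it is a unit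
modulo `I` and modulo `J`. By the Chinese remainder theorem some `y` is congruent to `a` modulo
`I` and to `t` modulo `J`; then `y` and `1 - y` are units, and `b = y - a` works.
-/

namespace Ideal

variable {R : Type*} [CommRing R]

theorem IsMaximal.isCoprime_of_not_le {I M : Ideal R} (hM : M.IsMaximal) (hIM : ¬I ≤ M) :
    IsCoprime I M :=
  isCoprime_iff_sup_eq.2 <| hM.1.2 _ <| lt_of_le_of_ne le_sup_right fun h => hIM (h ▸ le_sup_left)

theorem exists_isCoprime_inf_le_jacobson_bot [Finite (MaximalSpectrum R)] (I : Ideal R) :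
    ∃ J : Ideal R, IsCoprime I J ∧ I ⊓ J ≤ jacobson ⊥ := by
  let S := (Set.toFinite {M : MaximalSpectrum R | ¬I ≤ M.asIdeal}).toFinset
  refine ⟨⨅ M ∈ S, M.asIdeal, isCoprime_biInf fun M hM => ?_, le_sInf fun M ⟨_, hM⟩ => ?_⟩
  · exact M.isMaximal.isCoprime_of_not_le (by simpa [S] using hM)
  · by_cases hIM : I ≤ M
    · exact inf_le_left.trans hIM
    · exact inf_le_right.trans <| biInf_le (fun M : MaximalSpectrum R => M.asIdeal)
        (show (⟨M, hM⟩ : MaximalSpectrum R) ∈ S by simpa [S] using hIM)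

theorem isUnit_iff_isUnit_mk_and_isUnit_mk {I J : Ideal R} (hIJ : IsCoprime I J)
    (hjac : I ⊓ J ≤ jacobson ⊥) {y : R} :
    IsUnit y ↔ IsUnit (Quotient.mk I y) ∧ IsUnit (Quotient.mk J y) := by
  have := isLocalHom_of_le_jacobson_bot _ hjac
  rw [← isUnit_map_iff (Quotient.mk (I ⊓ J)),
    ← isUnit_map_iff (quotientInfEquivQuotientProd I J hIJ), Prod.isUnit_iff]
  simp

theorem exists_mk_eq_mk_and_mk_eq_mk {I J : Ideal R} (hIJ : IsCoprime I J) (a b : R) :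
    ∃ y : R, Quotient.mk I y = Quotient.mk I a ∧ Quotient.mk J y = Quotient.mk J b := by
  obtain ⟨y, hy⟩ := Quotient.mk_surjective
    ((quotientInfEquivQuotientProd I J hIJ).symm (Quotient.mk I a, Quotient.mk J b))
  exact ⟨y, by simpa [Prod.ext_iff] using congrArg (quotientInfEquivQuotientProd I J hIJ) hy⟩

end Ideal

theorem milnor_elem_unit_lift_both_general
    (R : Type*) [CommRing R] [Finite (MaximalSpectrum R)]
    (k : Type*) [Field k] [Algebra k R] (hk : (3 : Cardinal) ≤ Cardinal.mk k)
    (I : Ideal R)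
    (a : R) (ha : IsUnit (Ideal.Quotient.mk I a))
    (ha' : IsUnit (Ideal.Quotient.mk I (1 - a))) :
    ∃ b ∈ I, IsUnit (a + b) ∧ IsUnit (1 - (a + b)) := by
  obtain ⟨x, hx0, hx1⟩ := Cardinal.exists_ne_ne_of_three_le hk 0 1
  have ht : IsUnit (algebraMap k R x) := hx0.isUnit.map _
  have ht' : IsUnit (1 - algebraMap k R x) := by
    simpa using (sub_ne_zero.2 hx1.symm).isUnit.map (algebraMap k R)
  obtain ⟨J, hIJ, hjac⟩ := I.exists_isCoprime_inf_le_jacobson_bot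
  obtain ⟨y, hyI, hyJ⟩ := Ideal.exists_mk_eq_mk_and_mk_eq_mk hIJ a (algebraMap k R x)
  refine ⟨y - a, Ideal.Quotient.eq.1 hyI, ?_, ?_⟩ <;>
    rw [add_sub_cancel, Ideal.isUnit_iff_isUnit_mk_and_isUnit_mk hIJ hjac]
  · exact ⟨hyI ▸ ha, hyJ ▸ ht.map _⟩
  · simp only [map_sub, map_one, hyI, hyJ] at ha' ⊢
    exact ⟨ha', by simpa using ht'.map (Ideal.Quotient.mk J)⟩

/-- Let `R` be a semi-local ring (commutative Noetherian with finitely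
many maximal ideals) containing a field of cardinality at least three, and let `I ⊂ R`
be a proper ideal.  If `a ∈ R` is such that the residue classes of `a` and of `1 - a`
in `R/I` are both units, then there exists `b ∈ I` such that both `a + b` and
`1 - (a + b)` are units in `R`. -/
theorem milnor_elem_unit_lift_both
    (R : Type*) [CommRing R] [IsNoetherianRing R] [Finite (MaximalSpectrum R)]
    (k : Type*) [Field k] [Algebra k R] (hk : (3 : Cardinal) ≤ Cardinal.mk k)
    (I : Ideal R) (hI : I ≠ ⊤)
    (a : R) (ha : IsUnit (Ideal.Quotient.mk I a))
    (ha' : IsUnit (Ideal.Quotient.mk I (1 - a))) :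
    ∃ b ∈ I, IsUnit (a + b) ∧ IsUnit (1 - (a + b)) :=
  milnor_elem_unit_lift_both_general R k hk I a ha ha'
end

section
/- Let F be a field and A = F[T]_{(T)}. In the Milnor K-group K^M_2(F(T)), for any a ∈ A, u ∈ A^×, m ≥ 1 and j ∈ ℤ, the symbol {1 + aT^{m+1}, uT^j} lies in (1 + T^m A)·K^M_1(A), i.e., it is a sum of symbols {v, w} with v ∈ 1 + T^m A and w ∈ A^×. -/
open TensorProduct Polynomial

/-- The Steinberg relations inside `F^× ⊗_ℤ F^×`. -/
def steinbergRel (F : Type*) [Field F] :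
    Submodule ℤ (TensorProduct ℤ (Additive Fˣ) (Additive Fˣ)) :=
  Submodule.span ℤ {x | ∃ u v : Fˣ, (u : F) + (v : F) = 1 ∧
    x = (Additive.ofMul u) ⊗ₜ[ℤ] (Additive.ofMul v)}

/-- The second Milnor `K`-group of a field `F`. -/
def MilnorK2 (F : Type*) [Field F] :=
  TensorProduct ℤ (Additive Fˣ) (Additive Fˣ) ⧸ steinbergRel F

noncomputable instance (F : Type*) [Field F] : AddCommGroup (MilnorK2 F) :=
  inferInstanceAs (AddCommGroup
    (TensorProduct ℤ (Additive Fˣ) (Additive Fˣ) ⧸ steinbergRel F))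

/-- The Milnor symbol `{x, y}` in `K^M_2(F)`. -/
noncomputable def milnorSymbol {F : Type*} [Field F] (x y : Fˣ) : MilnorK2 F :=
  Submodule.Quotient.mk ((Additive.ofMul x) ⊗ₜ[ℤ] (Additive.ofMul y))

section helpers

variable {E : Type*} [Field E]

lemma milnorSymbol_mul_left (x y z : Eˣ) :
    milnorSymbol (x * y) z = milnorSymbol x z + milnorSymbol y z := by
  unfold milnorSymbol
  rw [ofMul_mul, add_tmul, Submodule.Quotient.mk_add]
  rfl

lemma milnorSymbol_mul_right (x y z : Eˣ) :
    milnorSymbol x (y * z) = milnorSymbol x y + milnorSymbol x z := by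
  unfold milnorSymbol
  rw [ofMul_mul, tmul_add, Submodule.Quotient.mk_add]
  rfl

lemma milnorSymbol_one_right (x : Eˣ) : milnorSymbol x (1 : Eˣ) = 0 := by
  unfold milnorSymbol
  rw [ofMul_one, tmul_zero, Submodule.Quotient.mk_zero]
  rfl

lemma milnorSymbol_one_left (y : Eˣ) : milnorSymbol (1 : Eˣ) y = 0 := by
  unfold milnorSymbol
  rw [ofMul_one, zero_tmul, Submodule.Quotient.mk_zero]
  rfl

lemma milnorSymbol_inv_right (x y : Eˣ) : milnorSymbol x y⁻¹ = - milnorSymbol x y := by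
  have h := milnorSymbol_mul_right x y⁻¹ y
  rw [inv_mul_cancel, milnorSymbol_one_right] at h
  exact eq_neg_of_add_eq_zero_left h.symm

lemma milnorSymbol_zpow_right (x y : Eˣ) :
    ∀ j : ℤ, milnorSymbol x (y ^ j) = j • milnorSymbol x y := by
  intro j
  induction j using Int.induction_on with
  | zero => simpa using milnorSymbol_one_right x
  | succ k ih =>
      rw [zpow_add_one, milnorSymbol_mul_right, ih, add_zsmul, one_zsmul]
  | pred k ih =>
      rw [zpow_sub_one, milnorSymbol_mul_right, ih, milnorSymbol_inv_right,
        show (-(k:ℤ) - 1) = -(k:ℤ) + (-1) from by ring, add_zsmul]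
      simp

lemma milnorSymbol_steinberg (x y : Eˣ) (h : (x : E) + (y : E) = 1) :
    milnorSymbol x y = 0 := by
  unfold milnorSymbol
  apply (Submodule.Quotient.mk_eq_zero _).mpr
  exact Submodule.subset_span ⟨x, y, h, rfl⟩

end helpers

set_option maxHeartbeats 1000000 in
/-- Let `F` be a field and `A = F[T]_{(T)}`.  In `K^M_2(F(T))`, for any
`a ∈ A`, `u ∈ A^×`, `m ≥ 1` and `j ∈ ℤ`, the symbol `{1 + aT^{m+1}, uT^j}` lies in
`(1 + T^m A)·K^M_1(A)`: it belongs to the subgroup of `K^M_2(F(T))` generated by symbols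
`{v, w}` with `v ∈ 1 + T^m A` and `w ∈ A^×`. -/
theorem milnorSymbol_one_add_aTm_mul_uTj_mem
    (F : Type*) [Field F]
    [hP : (Ideal.span {(X : Polynomial F)}).IsPrime]
    (hsub : (Ideal.span {(X : Polynomial F)}).primeCompl ≤
      Submonoid.comap (RingHom.id (Polynomial F)) (nonZeroDivisors (Polynomial F))) :
    ∀ (φ : Localization (Ideal.span {(X : Polynomial F)}).primeCompl →+*
        FractionRing (Polynomial F)),
      φ = IsLocalization.map (FractionRing (Polynomial F)) (RingHom.id (Polynomial F)) hsub →
    ∀ (a : Localization (Ideal.span {(X : Polynomial F)}).primeCompl)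
      (u : (Localization (Ideal.span {(X : Polynomial F)}).primeCompl)ˣ)
      (m : ℕ), 1 ≤ m → ∀ (j : ℤ)
      (v w : (FractionRing (Polynomial F))ˣ),
      (v : FractionRing (Polynomial F)) =
        1 + φ a * (algebraMap (Polynomial F) (FractionRing (Polynomial F)) X) ^ (m + 1) →
      (w : FractionRing (Polynomial F)) =
        φ u * (algebraMap (Polynomial F) (FractionRing (Polynomial F)) X) ^ j →
      milnorSymbol v w ∈ AddSubgroup.closure
        {z : MilnorK2 (FractionRing (Polynomial F)) |
          ∃ (p q : (FractionRing (Polynomial F))ˣ)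
            (b : Localization (Ideal.span {(X : Polynomial F)}).primeCompl)
            (c : (Localization (Ideal.span {(X : Polynomial F)}).primeCompl)ˣ),
            (p : FractionRing (Polynomial F)) =
              1 + (algebraMap (Polynomial F) (FractionRing (Polynomial F)) X) ^ m * φ b ∧
            (q : FractionRing (Polynomial F)) = φ c ∧
            z = milnorSymbol p q} := by
  intro φ hφ a u m hm j v w hv hw
  -- compatibility of φ with the algebra maps
  have hφc : ∀ p : Polynomial F,
      φ (algebraMap (Polynomial F)
          (Localization (Ideal.span {(X : Polynomial F)}).primeCompl) p)
        = algebraMap (Polynomial F) (FractionRing (Polynomial F)) p := by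
    intro p
    rw [hφ]
    have h := IsLocalization.map_comp
      (S := Localization (Ideal.span {(X : Polynomial F)}).primeCompl)
      (Q := FractionRing (Polynomial F)) hsub
    have := RingHom.congr_fun h p
    simpa using this
  set T : FractionRing (Polynomial F) := algebraMap (Polynomial F) (FractionRing (Polynomial F)) X
    with hT
  have hT0 : T ≠ 0 := by
    rw [hT, Ne, IsFractionRing.to_map_eq_zero_iff]
    exact Polynomial.X_ne_zero
  by_cases ha0 : φ a = 0
  · -- then v = 1 and the symbol vanishes
    have hv1 : v = 1 := Units.ext (by rw [hv, ha0, Units.val_one]; ring)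
    rw [hv1, milnorSymbol_one_left]
    exact AddSubgroup.zero_mem _
  · set TA : Localization (Ideal.span {(X : Polynomial F)}).primeCompl :=
      algebraMap (Polynomial F) (Localization (Ideal.span {(X : Polynomial F)}).primeCompl) X
      with hTA
    have hTAv : φ TA = T := hφc X
    have hTAmax : TA ∈ IsLocalRing.maximalIdeal
        (Localization (Ideal.span {(X : Polynomial F)}).primeCompl) :=
      (IsLocalization.AtPrime.to_map_mem_maximal_iff _
        (Ideal.span {(X : Polynomial F)}) X).mpr (Ideal.mem_span_singleton_self X)
    have one_add_unit : ∀ x : Localization (Ideal.span {(X : Polynomial F)}).primeCompl,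
        x ∈ IsLocalRing.maximalIdeal _ → IsUnit (1 + x) := by
      intro x hx
      by_contra h
      have h1 : (1 + x) ∈ IsLocalRing.maximalIdeal
          (Localization (Ideal.span {(X : Polynomial F)}).primeCompl) :=
        (IsLocalRing.mem_maximalIdeal _).mpr h
      have h2 : (1 : Localization (Ideal.span {(X : Polynomial F)}).primeCompl)
          ∈ IsLocalRing.maximalIdeal _ := by
        have := Ideal.sub_mem _ h1 hx
        simpa using this
      exact mem_nonunits_iff.mp ((IsLocalRing.mem_maximalIdeal _).mp h2) isUnit_one
    have hg : IsUnit (1 + a * (1 + TA) * TA ^ m) :=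
      one_add_unit _ (Ideal.mul_mem_left _ _ (Ideal.pow_mem_of_mem _ hTAmax m (by omega)))
    have h1T : IsUnit (1 + TA) := by
      rw [hTA, ← map_one (algebraMap (Polynomial F)
        (Localization (Ideal.span {(X : Polynomial F)}).primeCompl)), ← map_add]
      rw [IsLocalization.AtPrime.isUnit_to_map_iff _ (Ideal.span {(X : Polynomial F)})]
      intro hmem
      have hmem' : (1 + X : Polynomial F) ∈ Ideal.span {(X : Polynomial F)} := hmem
      rw [Ideal.mem_span_singleton] at hmem'
      have := Polynomial.X_dvd_iff.mp hmem'
      simp at this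
    have h2 : IsUnit (-(1 + TA)) := h1T.neg
    obtain ⟨cg, hcg⟩ := hg
    obtain ⟨c2, hc2⟩ := h2
    set Tu := Units.mk0 T hT0 with hTu
    set au := Units.mk0 (φ a) ha0 with hau
    set tu := -(au * Tu ^ m) with htu
    set gu := Units.map φ.toMonoidHom cg with hgu0
    set hu := Units.map φ.toMonoidHom c2 with hhu0
    set P1 := v * gu⁻¹ with hP1def
    have hTuv : (Tu : FractionRing (Polynomial F)) = T := rfl
    have hguv : (gu : FractionRing (Polynomial F)) = 1 + φ a * (1 + T) * T ^ m := by
      show φ (cg : Localization (Ideal.span {(X : Polynomial F)}).primeCompl) = _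
      rw [hcg]
      simp [hTAv]
    have hhuv : (hu : FractionRing (Polynomial F)) = -(1 + T) := by
      show φ (c2 : Localization (Ideal.span {(X : Polynomial F)}).primeCompl) = _
      rw [hc2]
      simp [hTAv]
    have hguv' : ((gu⁻¹ : _ˣ) : FractionRing (Polynomial F))
        = ((gu : FractionRing (Polynomial F)))⁻¹ := Units.val_inv_eq_inv_val gu
    have hgne : ((gu : FractionRing (Polynomial F))) ≠ 0 := Units.ne_zero gu
    have htuv : (tu : FractionRing (Polynomial F)) = -(φ a * T ^ m) := by
      rw [htu, Units.val_neg, Units.val_mul, Units.val_pow_eq_pow_val, hau, Units.val_mk0]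
      rfl
    have hP1v : (P1 : FractionRing (Polynomial F))
        = (v : FractionRing (Polynomial F)) * ((gu : FractionRing (Polynomial F)))⁻¹ := by
      rw [hP1def, Units.val_mul, hguv']
    have hcginv : φ ((cg⁻¹ : _ˣ) : Localization (Ideal.span {(X : Polynomial F)}).primeCompl)
        = ((gu : FractionRing (Polynomial F)))⁻¹ := by
      have h' : (gu⁻¹ : _ˣ) = Units.map φ.toMonoidHom cg⁻¹ := by
        rw [hgu0, ← map_inv]
      rw [← hguv', h']
      rfl
    -- the three Steinberg relations
    have hS3 : milnorSymbol v (tu * Tu) = 0 := by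
      apply milnorSymbol_steinberg
      rw [Units.val_mul, hv, htuv, hTuv]
      ring
    have hS1 : milnorSymbol P1 ((-gu⁻¹) * tu) = 0 := by
      apply milnorSymbol_steinberg
      have hval : (((-gu⁻¹) * tu : _ˣ) : FractionRing (Polynomial F))
          = ((gu : FractionRing (Polynomial F)))⁻¹ * (φ a * T ^ m) := by
        rw [Units.val_mul, Units.val_neg, hguv', htuv]
        ring
      rw [hval, hP1v]
      field_simp
      rw [hv, hguv]
      ring
    have hS2 : milnorSymbol gu (tu * (-hu)) = 0 := by
      apply milnorSymbol_steinberg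
      have hval : ((tu * (-hu) : _ˣ) : FractionRing (Polynomial F))
          = -(φ a * T ^ m) * (1 + T) := by
        rw [Units.val_mul, htuv, Units.val_neg, hhuv]
        ring
      rw [hval, hguv]
      ring
    have hvdec : v = P1 * gu := by
      rw [hP1def, inv_mul_cancel_right]
    have e3 : milnorSymbol v Tu = - milnorSymbol v tu := by
      rw [milnorSymbol_mul_right, add_comm] at hS3
      exact eq_neg_of_add_eq_zero_left hS3
    have e1 : milnorSymbol P1 tu = - milnorSymbol P1 (-gu⁻¹) := by
      rw [milnorSymbol_mul_right, add_comm] at hS1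
      exact eq_neg_of_add_eq_zero_left hS1
    have e2 : milnorSymbol gu tu = - milnorSymbol gu (-hu) := by
      rw [milnorSymbol_mul_right] at hS2
      exact eq_neg_of_add_eq_zero_left hS2
    have ev : milnorSymbol v tu = milnorSymbol P1 tu + milnorSymbol gu tu := by
      conv_lhs => rw [hvdec]
      exact milnorSymbol_mul_left _ _ _
    have eT : milnorSymbol v Tu
        = milnorSymbol P1 (-gu⁻¹) + milnorSymbol gu (-hu) := by
      rw [e3, ev, e1, e2]
      abel
    have hwu : w = Units.map φ.toMonoidHom u * Tu ^ j := by
      apply Units.ext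
      rw [Units.val_mul, Units.val_zpow_eq_zpow_val, hw, hTuv]
      rfl
    have main : milnorSymbol v w = milnorSymbol v (Units.map φ.toMonoidHom u)
        + j • (milnorSymbol P1 (-gu⁻¹) + milnorSymbol gu (-hu)) := by
      rw [hwu, milnorSymbol_mul_right, milnorSymbol_zpow_right, eT]
    rw [main]
    refine AddSubgroup.add_mem _ ?_
      (AddSubgroup.zsmul_mem _ (AddSubgroup.add_mem _ ?_ ?_) j)
    · refine AddSubgroup.subset_closure ⟨v, Units.map φ.toMonoidHom u, a * TA, u, ?_, rfl, rfl⟩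
      rw [hv, map_mul, hTAv]
      ring
    · refine AddSubgroup.subset_closure
        ⟨P1, -gu⁻¹, -((cg⁻¹ : _ˣ) : Localization (Ideal.span {(X : Polynomial F)}).primeCompl) * a,
          -cg⁻¹, ?_, ?_, rfl⟩
      · rw [hP1v, map_mul, map_neg, hcginv]
        field_simp
        rw [hv, hguv]
        ring
      · rw [Units.val_neg, hguv', ← hcginv]
        rw [show ((-cg⁻¹ : _ˣ) : Localization (Ideal.span {(X : Polynomial F)}).primeCompl)
          = -((cg⁻¹ : _ˣ) : Localization (Ideal.span {(X : Polynomial F)}).primeCompl)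
          from Units.val_neg _, map_neg]
    · refine AddSubgroup.subset_closure ⟨gu, -hu, a * (1 + TA), -c2, ?_, ?_, rfl⟩
      · rw [hguv, map_mul]
        have : φ (1 + TA) = 1 + T := by rw [map_add, map_one, hTAv]
        rw [this]
        ring
      · rw [Units.val_neg, hhuv]
        rw [show ((-c2 : _ˣ) : Localization (Ideal.span {(X : Polynomial F)}).primeCompl)
          = -((c2 : _ˣ) : Localization (Ideal.span {(X : Polynomial F)}).primeCompl)
          from Units.val_neg _, map_neg, hc2]
        simp [hTAv]
end

section
/- Let R be a commutative ring and m ≥ 1. The map γ from the truncated big Witt vectors W_m(R) to the group of units (1 + T·R[T]/(T^{m+1}))^× ⊂ (R[T]/(T^{m+1}))^× sending (a_1, ..., a_m) to the class of ∏_{i=1}^m (1 − a_i T^i) is a group isomorphism onto the subgroup of units congruent to 1 mod T. -/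
/-!
Write `γ_n(a) = ∏_{i<n} (1 - a_i T^{i+1})`. Modulo `T^{k+1}` every factor with `i ≥ k` is `1`,
so the coefficients of `T^0, …, T^k` in `γ_n(a)` only depend on `a_0, …, a_{k-1}`, and the
factor `1 - a_k T^{k+1}` contributes exactly `-a_k` to the coefficient of `T^{k+1}`. The system
"`γ_m(a)` has prescribed coefficients in degrees `1, …, m`" is therefore triangular with unit
diagonal, hence uniquely solvable one coefficient at a time. Units of `R[T]/(T^{m+1})` that are
`1` mod `T` are exactly the classes of polynomials with constant coefficient `1`, because `T` is
nilpotent there.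
-/

open Polynomial Finset

section

variable {R : Type*} [CommRing R]

theorem Polynomial.mk_span_X_pow_eq_mk_iff {n : ℕ} {f g : R[X]} :
    Ideal.Quotient.mk (Ideal.span {X ^ n}) f = Ideal.Quotient.mk (Ideal.span {X ^ n}) g ↔
      ∀ j < n, f.coeff j = g.coeff j := by
  simp only [Ideal.Quotient.eq, Ideal.mem_span_singleton, X_pow_dvd_iff, coeff_sub, sub_eq_zero]

theorem Polynomial.isUnit_mk_span_X_pow_one_add_X_mul (n : ℕ) (g : R[X]) :
    IsUnit (Ideal.Quotient.mk (Ideal.span {(X : R[X]) ^ n}) (1 + X * g)) := by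
  have hX : IsNilpotent (Ideal.Quotient.mk (Ideal.span {(X : R[X]) ^ n}) X) :=
    ⟨n, by rw [← map_pow, Ideal.Quotient.eq_zero_iff_mem]; exact Ideal.mem_span_singleton_self _⟩
  rw [map_add, map_one, map_mul]
  exact ((Commute.all _ _).isNilpotent_mul_right hX).isUnit_one_add

noncomputable def gammaProd (a : ℕ → R) (n : ℕ) : R[X] :=
  ∏ i ∈ range n, (1 - C (a i) * X ^ (i + 1))

theorem gammaProd_congr {a b : ℕ → R} {n : ℕ} (h : ∀ i < n, a i = b i) :
    gammaProd a n = gammaProd b n :=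
  prod_congr rfl fun i hi => by rw [h i (mem_range.mp hi)]

theorem coeff_zero_gammaProd (a : ℕ → R) (n : ℕ) : (gammaProd a n).coeff 0 = 1 := by
  simp [gammaProd, coeff_zero_eq_eval_zero, eval_prod]

theorem exists_gammaProd_eq_one_add_X_mul (a : ℕ → R) (n : ℕ) :
    ∃ g : R[X], gammaProd a n = 1 + X * g := by
  obtain ⟨g, hg⟩ := X_dvd_iff.mpr (show (gammaProd a n - 1).coeff 0 = 0 by
    rw [coeff_sub, coeff_zero_gammaProd, coeff_one_zero, sub_self])
  exact ⟨g, by rw [← hg, add_sub_cancel]⟩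

theorem mk_gammaProd_of_le (a : ℕ → R) {k n : ℕ} (hkn : k ≤ n) :
    Ideal.Quotient.mk (Ideal.span {X ^ (k + 1)}) (gammaProd a n) =
      Ideal.Quotient.mk (Ideal.span {X ^ (k + 1)}) (gammaProd a k) := by
  have htail : Ideal.Quotient.mk (Ideal.span {X ^ (k + 1)})
      (∏ i ∈ Ico k n, (1 - C (a i) * X ^ (i + 1))) = 1 := by
    rw [map_prod]
    refine prod_eq_one fun i hi => ?_
    have hXi : Ideal.Quotient.mk (Ideal.span {(X : R[X]) ^ (k + 1)}) (X ^ (i + 1)) = 0 := by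
      rw [Ideal.Quotient.eq_zero_iff_mem, Ideal.mem_span_singleton]
      exact pow_dvd_pow X (Nat.succ_le_succ (mem_Ico.mp hi).1)
    rw [map_sub, map_one, map_mul, hXi, mul_zero, sub_zero]
  rw [gammaProd, ← prod_range_mul_prod_Ico _ hkn, map_mul, htail, mul_one, gammaProd]

theorem coeff_gammaProd_of_le (a : ℕ → R) {j k n : ℕ} (hjk : j ≤ k) (hkn : k ≤ n) :
    (gammaProd a n).coeff j = (gammaProd a k).coeff j :=
  mk_span_X_pow_eq_mk_iff.mp (mk_gammaProd_of_le a hkn) j (Nat.lt_succ_of_le hjk)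

theorem coeff_gammaProd_succ (a : ℕ → R) {k n : ℕ} (hk : k < n) :
    (gammaProd a n).coeff (k + 1) = (gammaProd a k).coeff (k + 1) - a k := by
  have hstep : gammaProd a (k + 1) = gammaProd a k * (1 - C (a k) * X ^ (k + 1)) :=
    prod_range_succ _ _
  rw [coeff_gammaProd_of_le a le_rfl hk, hstep, mul_sub, mul_one, coeff_sub, mul_left_comm,
    coeff_C_mul, coeff_mul_X_pow', if_pos le_rfl, Nat.sub_self, coeff_zero_gammaProd, mul_one]

theorem eq_of_mk_gammaProd_eq {a b : ℕ → R} {n : ℕ}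
    (h : Ideal.Quotient.mk (Ideal.span {X ^ (n + 1)}) (gammaProd a n) =
      Ideal.Quotient.mk (Ideal.span {X ^ (n + 1)}) (gammaProd b n)) :
    ∀ k < n, a k = b k := by
  intro k
  induction k using Nat.strong_induction_on with
  | _ k ih =>
    intro hk
    have hcoeff := mk_span_X_pow_eq_mk_iff.mp h (k + 1) (by omega)
    rw [coeff_gammaProd_succ a hk, coeff_gammaProd_succ b hk,
      gammaProd_congr fun i hi => ih i hi (hi.trans hk)] at hcoeff
    exact sub_right_injective hcoeff

theorem exists_coeff_gammaProd_eq {f : R[X]} (hf : f.coeff 0 = 1) (n : ℕ) :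
    ∃ a : ℕ → R, ∀ j < n + 1, (gammaProd a n).coeff j = f.coeff j := by
  induction n with
  | zero => exact ⟨0, fun j hj => by rw [Nat.lt_one_iff.mp hj, coeff_zero_gammaProd, hf]⟩
  | succ n ih =>
    obtain ⟨a, ha⟩ := ih
    set a' := Function.update a n ((gammaProd a n).coeff (n + 1) - f.coeff (n + 1)) with ha'
    have hprefix : gammaProd a' n = gammaProd a n :=
      gammaProd_congr fun i hi => Function.update_of_ne hi.ne _ _
    refine ⟨a', fun j hj => ?_⟩
    rcases Nat.lt_succ_iff_lt_or_eq.mp hj with hj | rfl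
    · rw [coeff_gammaProd_of_le a' (Nat.lt_succ_iff.mp hj) n.le_succ, hprefix, ha j hj]
    · rw [coeff_gammaProd_succ a' n.lt_succ_self, hprefix, ha', Function.update_self,
        sub_sub_cancel]

theorem prod_fin_eq_gammaProd {m : ℕ} (a : ℕ → R) :
    ∏ i : Fin m, (1 - C (a i) * X ^ ((i : ℕ) + 1)) = gammaProd a m :=
  Fin.prod_univ_eq_prod_range (fun i => 1 - C (a i) * X ^ (i + 1)) m

end

theorem witt_gamma_bijective_general
    (R : Type*) [CommRing R] (m : ℕ) :
    Function.Injective (fun a : Fin m → R =>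
      Ideal.Quotient.mk (Ideal.span {(X : Polynomial R) ^ (m + 1)})
        (∏ i : Fin m, (1 - C (a i) * X ^ ((i : ℕ) + 1))))
    ∧ ∀ x : Polynomial R ⧸ Ideal.span {(X : Polynomial R) ^ (m + 1)},
      ((∃ a : Fin m → R,
        Ideal.Quotient.mk (Ideal.span {(X : Polynomial R) ^ (m + 1)})
          (∏ i : Fin m, (1 - C (a i) * X ^ ((i : ℕ) + 1))) = x)
        ↔ (IsUnit x ∧ ∃ g : Polynomial R,
            x = Ideal.Quotient.mk (Ideal.span {(X : Polynomial R) ^ (m + 1)})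
              (1 + X * g))) := by
  let extend (a : Fin m → R) : ℕ → R := fun i => if h : i < m then a ⟨i, h⟩ else 0
  have prod_eq (a : Fin m → R) :
      ∏ i : Fin m, (1 - C (a i) * X ^ ((i : ℕ) + 1)) = gammaProd (extend a) m := by
    simp only [← prod_fin_eq_gammaProd, extend, Fin.is_lt, dite_true]
  refine ⟨fun a b hab => funext fun i => ?_, fun x => ⟨?_, ?_⟩⟩
  · have hext := eq_of_mk_gammaProd_eq (by simpa only [prod_eq] using hab) i i.is_lt
    simpa only [extend, Fin.is_lt, dite_true] using hext
  · rintro ⟨a, rfl⟩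
    obtain ⟨g, hg⟩ := exists_gammaProd_eq_one_add_X_mul (extend a) m
    rw [prod_eq, hg]
    exact ⟨isUnit_mk_span_X_pow_one_add_X_mul _ g, g, rfl⟩
  · rintro ⟨-, g, rfl⟩
    obtain ⟨a, ha⟩ := exists_coeff_gammaProd_eq (f := 1 + X * g) (by simp) m
    exact ⟨fun i => a i, by rw [prod_fin_eq_gammaProd, mk_span_X_pow_eq_mk_iff]; exact ha⟩

/-- Let `R` be a commutative ring and `m ≥ 1`.  The map `γ` sending
`(a_1, …, a_m)` to the class of `∏_{i=1}^m (1 − a_i T^i)` in `R[T]/(T^{m+1})` identifies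
the (truncated big) Witt vectors `W_m(R)` — whose underlying set is `R^m` — bijectively
with the subgroup of units of `R[T]/(T^{m+1})` congruent to `1` mod `T`:  the map is
injective, and its range consists exactly of the units congruent to `1` mod `T`. -/
theorem witt_gamma_bijective
    (R : Type*) [CommRing R] (m : ℕ) (hm : 1 ≤ m) :
    Function.Injective (fun a : Fin m → R =>
      Ideal.Quotient.mk (Ideal.span {(X : Polynomial R) ^ (m + 1)})
        (∏ i : Fin m, (1 - C (a i) * X ^ ((i : ℕ) + 1))))
    ∧ ∀ x : Polynomial R ⧸ Ideal.span {(X : Polynomial R) ^ (m + 1)},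
      ((∃ a : Fin m → R,
        Ideal.Quotient.mk (Ideal.span {(X : Polynomial R) ^ (m + 1)})
          (∏ i : Fin m, (1 - C (a i) * X ^ ((i : ℕ) + 1))) = x)
        ↔ (IsUnit x ∧ ∃ g : Polynomial R,
            x = Ideal.Quotient.mk (Ideal.span {(X : Polynomial R) ^ (m + 1)})
              (1 + X * g))) :=
  witt_gamma_bijective_general R m
end

section
/- Let k ⊂ l be a finite field extension generated by a root α of an irreducible polynomial f(T) = 1 − T·p(T) ∈ k[T] (so l = k[T]/(f) and α·p(α) = 1). Then the field norm from l(T) to k(T) satisfies N_{l(T)/k(T)}(1 − p(α)·T) = f(T) = 1 − T·p(T). -/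
open Polynomial

section PolyNormAux

variable {K : Type*} [Field K] {L : Type*} [CommRing L] [Algebra K L]
variable {ι : Type*} [Fintype ι] [DecidableEq ι]

noncomputable local instance polyAlgebra : Algebra K[X] L[X] :=
  (mapRingHom (algebraMap K L)).toAlgebra

lemma polyAlgebra_smul (r : K[X]) (q : L[X]) : r • q = r.map (algebraMap K L) * q := rfl

lemma polyAlgebra_algebraMap (r : K[X]) :
    algebraMap K[X] L[X] r = r.map (algebraMap K L) := rfl

lemma C_smul_C (a : K) (m : L) : (C a : K[X]) • (C m : L[X]) = C (a • m) := by
  rw [polyAlgebra_smul, map_C, ← C_mul, Algebra.smul_def]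

/-- The basis of `L[X]` over `K[X]` induced by a basis of `L` over `K`. -/
noncomputable def polyBasis (e : Module.Basis ι K L) : Module.Basis ι K[X] L[X] :=
  Module.Basis.mk (v := fun i => (C (e i) : L[X]))
    (by
      rw [Fintype.linearIndependent_iff]
      intro g hg i
      ext n
      have h1 : ∑ j, ((g j).coeff n) • e j = 0 := by
        have := congrArg (fun q : L[X] => q.coeff n) hg
        simp only [finset_sum_coeff, polyAlgebra_smul, coeff_mul_C, coeff_map,
          coeff_zero] at this
        simpa only [Algebra.smul_def] using this
      simpa using Fintype.linearIndependent_iff.mp e.linearIndependent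
        (fun j => (g j).coeff n) h1 i)
    (by
      intro q _
      induction q using Polynomial.induction_on' with
      | add a b ha hb => exact Submodule.add_mem _ (ha trivial) (hb trivial)
      | monomial n b =>
          have key : (monomial n b : L[X]) =
              ∑ i, (monomial n (e.repr b i) : K[X]) • (C (e i) : L[X]) := by
            have h2 : ∀ i, (monomial n (e.repr b i) : K[X]) • (C (e i) : L[X]) =
                monomial n ((e.repr b i) • e i) := by
              intro i
              rw [polyAlgebra_smul, map_monomial, monomial_mul_C, Algebra.smul_def]
            rw [Finset.sum_congr rfl fun i _ => h2 i,
              ← map_sum (monomial n : L →ₗ[L] L[X]) _ Finset.univ, e.sum_repr]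
          rw [key]
          exact Submodule.sum_mem _ fun i _ =>
            Submodule.smul_mem _ _ (Submodule.subset_span ⟨i, rfl⟩))

@[simp] lemma polyBasis_apply (e : Module.Basis ι K L) (i : ι) : polyBasis e i = C (e i) := by
  rw [polyBasis, Module.Basis.coe_mk]

lemma polyBasis_leftMulMatrix_C (e : Module.Basis ι K L) (b : L) :
    Algebra.leftMulMatrix (polyBasis e) (C b : L[X]) =
      (Algebra.leftMulMatrix e b).map C := by
  refine Matrix.ext fun i j => ?_
  rw [Matrix.map_apply, Algebra.leftMulMatrix_eq_repr_mul, Algebra.leftMulMatrix_eq_repr_mul,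
    polyBasis_apply, ← C_mul]
  have hb : (C (b * e j) : L[X]) = ∑ m, (C (e.repr (b * e j) m) : K[X]) • polyBasis e m := by
    simp only [polyBasis_apply, C_smul_C]
    rw [← map_sum (C : L →+* L[X]) _ Finset.univ, e.sum_repr]
  rw [hb]
  exact congrFun (Module.Basis.repr_sum_self (polyBasis e) (fun m => C (e.repr (b * e j) m))) i

lemma polyNorm_C (e : Module.Basis ι K L) (b : L) :
    Algebra.norm K[X] (C b : L[X]) = C (Algebra.norm K b) := by
  rw [Algebra.norm_eq_matrix_det (polyBasis e), polyBasis_leftMulMatrix_C,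
    Algebra.norm_eq_matrix_det e]
  exact ((C : K →+* K[X]).map_det _).symm

lemma polyNorm_C_sub_X (pb : PowerBasis K L) :
    Algebra.norm K[X] (C pb.gen - X : L[X]) =
      (-1) ^ pb.dim * minpoly K pb.gen := by
  rw [Algebra.norm_eq_matrix_det (polyBasis pb.basis), map_sub, polyBasis_leftMulMatrix_C]
  have hX : (X : L[X]) = algebraMap K[X] L[X] X := by
    rw [polyAlgebra_algebraMap, map_X]
  have hXm : Algebra.leftMulMatrix (polyBasis pb.basis) (X : L[X]) =
      Matrix.scalar (Fin pb.dim) (X : K[X]) := by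
    rw [hX, AlgHom.commutes]
    rfl
  rw [hXm]
  have : (Algebra.leftMulMatrix pb.basis pb.gen).map C -
      Matrix.scalar (Fin pb.dim) (X : K[X]) =
      -((Algebra.leftMulMatrix pb.basis pb.gen).charmatrix) := by
    rw [Matrix.charmatrix, neg_sub, RingHom.mapMatrix_apply]
  rw [this, Matrix.det_neg, Fintype.card_fin, ← Matrix.charpoly, charpoly_leftMulMatrix pb]


theorem helper_norm (k : Type*) [Field k] (p : Polynomial k)
    (hf : Irreducible (1 - X * p)) :
    Algebra.norm (Polynomial k)
      (1 - C (AdjoinRoot.mk (1 - X * p) p) * X : Polynomial (AdjoinRoot (1 - X * p))) =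
      1 - X * p := by
  set f : k[X] := 1 - X * p with hfdef
  have hf0 : f ≠ 0 := hf.ne_zero
  set α := AdjoinRoot.root f with hα
  set β := AdjoinRoot.mk f p with hβ
  set c := f.leadingCoeff with hc'
  have hc : c ≠ 0 := leadingCoeff_ne_zero.mpr hf0
  let pb := AdjoinRoot.powerBasis hf0
  have hgen : pb.gen = α := AdjoinRoot.powerBasis_gen hf0
  have hβα : β * α = 1 := by
    have h0 : AdjoinRoot.mk f (1 - X * p) = 0 := by rw [← hfdef]; exact AdjoinRoot.mk_self
    simp only [map_sub, map_one, map_mul, AdjoinRoot.mk_X] at h0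
    exact (mul_comm β α).trans (sub_eq_zero.mp h0).symm
  have hmin : minpoly k α = f * C c⁻¹ := AdjoinRoot.minpoly_root hf0
  have hf00 : f.coeff 0 = 1 := by
    simp [hfdef, coeff_sub, coeff_one, mul_coeff_zero, coeff_X_zero]
  have hmin0 : (minpoly k α).coeff 0 = c⁻¹ := by
    rw [hmin, coeff_mul_C, hf00, one_mul]
  have hNα : Algebra.norm k α = (-1) ^ pb.dim * c⁻¹ := by
    have := Algebra.PowerBasis.norm_gen_eq_coeff_zero_minpoly pb
    rw [hgen, hmin0] at this
    exact this
  have hN1 : Algebra.norm k β * Algebra.norm k α = 1 := by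
    rw [← map_mul, hβα, map_one]
  have hNβ : Algebra.norm k β = (-1) ^ pb.dim * c := by
    rw [hNα] at hN1
    have hb : ((-1 : k) ^ pb.dim * c⁻¹) ≠ 0 :=
      mul_ne_zero (pow_ne_zero _ (by norm_num)) (inv_ne_zero hc)
    have key : ((-1 : k) ^ pb.dim * c) * ((-1) ^ pb.dim * c⁻¹) = 1 := by
      rw [mul_mul_mul_comm, ← mul_pow, neg_mul_neg, one_mul, one_pow, one_mul,
        mul_inv_cancel₀ hc]
    exact mul_right_cancel₀ hb (hN1.trans key.symm)
  have hfactor : (1 - C β * X : Polynomial (AdjoinRoot f)) = C β * (C α - X) := by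
    rw [mul_sub, ← C_mul, hβα, map_one]
  have hnormCX : Algebra.norm k[X] (C α - X : Polynomial (AdjoinRoot f)) =
      (-1) ^ pb.dim * minpoly k α := by
    have := polyNorm_C_sub_X pb
    rwa [hgen] at this
  rw [hfactor, map_mul, polyNorm_C pb.basis, hnormCX, hNβ, hmin]
  calc (C ((-1) ^ pb.dim * c) : k[X]) * ((-1) ^ pb.dim * (f * C c⁻¹))
      = (((-1 : k[X]) ^ pb.dim * (-1) ^ pb.dim) * (C c * C c⁻¹)) * f := by
        rw [map_mul, map_pow, map_neg, map_one]; ring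
    _ = f := by
        rw [← mul_pow, neg_mul_neg, one_mul, one_pow, ← C_mul, mul_inv_cancel₀ hc,
          map_one, one_mul, one_mul]

end PolyNormAux

/-- Let `k ⊂ l` be the extension generated by a root `α` of an
irreducible polynomial `f(T) = 1 − T·p(T) ∈ k[T]` (so `l = k[T]/(f)`).  Then the norm
of `1 − p(α)·T` for the extension `l[T]/k[T]` (equivalently `l(T)/k(T)`) equals
`1 − T·p(T) = f(T)`. -/
theorem norm_one_sub_p_alpha_T
    (k : Type*) [Field k] (p : Polynomial k)
    (hf : Irreducible (1 - X * p)) :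
    letI : Algebra (Polynomial k)
        (Polynomial (Polynomial k ⧸ Ideal.span {1 - X * p})) :=
      @RingHom.toAlgebra _ _ _ Polynomial.commSemiring (mapRingHom ((Ideal.Quotient.mk (Ideal.span {1 - X * p})).comp
        (C : k →+* Polynomial k)))
    Algebra.norm (Polynomial k)
      (1 - C (Ideal.Quotient.mk (Ideal.span {1 - X * p}) p) * X :
        Polynomial (Polynomial k ⧸ Ideal.span {1 - X * p})) =
      1 - X * p := by
  exact helper_norm k p hf
end

section
/- Let R be a semi-local ring containing an infinite field k. Then every element a ∈ R can be written as a = u_1 + u_2 where u_1 ∈ k^× and u_2 ∈ R^×. -/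
/-- Let `R` be a semi-local ring (commutative ring with finitely many
maximal ideals) containing an infinite field `k`.  Then every element `a ∈ R` can be
written as `a = u₁ + u₂` where `u₁ ∈ k^×` and `u₂ ∈ R^×`. -/
theorem semiLocal_add_unit_decomposition
    (R : Type*) [CommRing R] [Finite (MaximalSpectrum R)]
    (k : Type*) [Field k] [Infinite k] [Algebra k R]
    (a : R) :
    ∃ (u₁ : kˣ) (u₂ : Rˣ), a = algebraMap k R u₁ + u₂ := by
  classical
  set S : Set k := {c | ∃ m : MaximalSpectrum R, a - algebraMap k R c ∈ m.asIdeal} with hSdef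
  have hS : S.Finite := by
    have hsub : S ⊆ ⋃ m : MaximalSpectrum R, {c | a - algebraMap k R c ∈ m.asIdeal} := by
      rintro c ⟨m, hm⟩
      exact Set.mem_iUnion.2 ⟨m, hm⟩
    refine Set.Finite.subset (Set.finite_iUnion fun m => ?_) hsub
    refine Set.Subsingleton.finite ?_
    intro c hc c' hc'
    by_contra h
    have hmem : algebraMap k R (c' - c) ∈ m.asIdeal := by
      have := m.asIdeal.sub_mem hc hc'
      have h2 : a - algebraMap k R c - (a - algebraMap k R c') = algebraMap k R (c' - c) := by
        rw [map_sub]; ring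
      rwa [h2] at this
    have hu : IsUnit (algebraMap k R (c' - c)) :=
      (isUnit_iff_ne_zero.2 (sub_ne_zero.2 (Ne.symm h))).map (algebraMap k R)
    exact m.2.ne_top (m.asIdeal.eq_top_of_isUnit_mem hmem hu)
  obtain ⟨c, hc⟩ := (hS.union (Set.finite_singleton 0)).infinite_compl.nonempty
  simp only [Set.mem_compl_iff, Set.mem_union, Set.mem_singleton_iff, not_or] at hc
  obtain ⟨hcS, hc0⟩ := hc
  have hu : IsUnit (a - algebraMap k R c) := by
    by_contra h
    obtain ⟨M, hM, hmem⟩ := exists_max_ideal_of_mem_nonunits h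
    exact hcS ⟨⟨M, hM⟩, hmem⟩
  refine ⟨Units.mk0 c hc0, hu.unit, ?_⟩
  rw [IsUnit.unit_spec]
  simp
end
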